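/- Let G₁ be a regular simple graph of order n > 3, let e₁ be an edge of G₁, and let G₂ be a simple graph of order n and size m₂ whose complement is isomorphic to G₁ - e₁. Then m₂·M1(G₂) < n·M2(G₂). -/

import Mathlib

/-!
Complementing and transporting along the isomorphism, `G₂` has degree `s = n - 1 - r` at every
vertex except the two preimages `a, b` of the ends of `e₁`, which are adjacent in `G₂` and have
degree `s + 1`. For such a graph `2m = ns + 2`, `M₁ = ns² + 4s + 2` and
`M₂ = ms² + 2s(s + 1) + 1`, the last because on an edge `e = uv` one has
`d(u)d(v) = s² + s·|e ∩ {a, b}| + [e = ab]`. Hence `n·M₂ - m·M₁ = (n - 4)s + n - 2 > 0`.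
-/

/-- Degree of a vertex (classical, so it works for any graph on a finite vertex type). -/
noncomputable def gdeg {V : Type*} [Fintype V] (G : SimpleGraph V) (v : V) : ℕ := by
  classical exact G.degree v

/-- First Zagreb index: sum of squares of the vertex degrees. -/
noncomputable def zagrebM1 {V : Type*} [Fintype V] (G : SimpleGraph V) : ℕ :=
  ∑ v, gdeg G v ^ 2

/-- Second Zagreb index: sum of d(u)·d(v) over the edges uv. -/
noncomputable def zagrebM2 {V : Type*} [Fintype V] (G : SimpleGraph V) : ℕ := by
  classical exact
    ∑ e ∈ G.edgeFinset,
      Sym2.lift ⟨fun u v => gdeg G u * gdeg G v, fun u v => by simp [Nat.mul_comm]⟩ e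

/-- The size (number of edges) of a graph. -/
noncomputable def gsize {V : Type*} [Fintype V] (G : SimpleGraph V) : ℕ := by
  classical exact G.edgeFinset.card

/-- A graph is `r`-regular if every vertex has degree `r`. -/
def gregOfDeg {V : Type*} [Fintype V] (G : SimpleGraph V) (r : ℕ) : Prop :=
  ∀ v, gdeg G v = r

/-- A graph is regular if all its vertices have the same degree. -/
def gregular {V : Type*} [Fintype V] (G : SimpleGraph V) : Prop :=
  ∃ r, gregOfDeg G r

open Finset SimpleGraph

lemma gdeg_eq_degree {V : Type*} [Fintype V] (G : SimpleGraph V) (v : V)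
    [Fintype (G.neighborSet v)] : gdeg G v = G.degree v := by
  unfold gdeg
  congr!

lemma gsize_eq_card_edgeFinset {V : Type*} [Fintype V] (G : SimpleGraph V) [Fintype G.edgeSet] :
    gsize G = #G.edgeFinset := by
  unfold gsize
  congr!

lemma zagrebM2_eq_sum {V : Type*} [Fintype V] (G : SimpleGraph V) [Fintype G.edgeSet] :
    zagrebM2 G = ∑ e ∈ G.edgeFinset,
      Sym2.lift ⟨fun u v => gdeg G u * gdeg G v, fun u v => by simp [Nat.mul_comm]⟩ e := by
  unfold zagrebM2
  congr!

lemma sum_ite_eq_or_eq {V : Type*} [Fintype V] [DecidableEq V] {a b : V} (hab : a ≠ b) (c : ℕ) :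
    ∑ v, (if v = a ∨ v = b then c else 0) = 2 * c := by
  rw [Finset.sum_ite, Finset.sum_const_zero, add_zero, Finset.sum_const, smul_eq_mul,
    Finset.filter_or, Finset.filter_eq', Finset.filter_eq', if_pos (mem_univ a), if_pos (mem_univ b),
    ← Finset.insert_eq, Finset.card_pair hab]

section NearRegular

variable {V : Type*} [Fintype V] [DecidableEq V] {G : SimpleGraph V} [DecidableRel G.Adj]
  {a b : V} {s : ℕ}

lemma two_mul_card_edgeFinset_of_degree_eq (hab : a ≠ b)
    (hd : ∀ v, G.degree v = s + if v = a ∨ v = b then 1 else 0) :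
    2 * #G.edgeFinset = Fintype.card V * s + 2 := by
  rw [← sum_degrees_eq_twice_card_edges, Finset.sum_congr rfl fun v _ => hd v,
    Finset.sum_add_distrib, sum_ite_eq_or_eq hab]
  simp

lemma zagrebM1_of_degree_eq (hab : a ≠ b)
    (hd : ∀ v, G.degree v = s + if v = a ∨ v = b then 1 else 0) :
    zagrebM1 G = Fintype.card V * s ^ 2 + 2 * (2 * s + 1) := by
  have hsq : ∀ v, gdeg G v ^ 2 = s ^ 2 + if v = a ∨ v = b then 2 * s + 1 else 0 := by
    intro v
    rw [gdeg_eq_degree, hd]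
    split_ifs <;> ring
  rw [zagrebM1, Finset.sum_congr rfl fun v _ => hsq v, Finset.sum_add_distrib,
    sum_ite_eq_or_eq hab]
  simp

lemma zagrebM2_of_degree_eq (hadj : G.Adj a b)
    (hd : ∀ v, G.degree v = s + if v = a ∨ v = b then 1 else 0) :
    zagrebM2 G = #G.edgeFinset * s ^ 2 + 2 * s * (s + 1) + 1 := by
  have hedge : ∀ e ∈ G.edgeFinset,
      Sym2.lift ⟨fun u v => gdeg G u * gdeg G v, fun u v => by simp [Nat.mul_comm]⟩ e =
        s ^ 2 + s * ((if a ∈ e then 1 else 0) + (if b ∈ e then 1 else 0)) +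
          if e = s(a, b) then 1 else 0 := by
    intro e he
    induction e using Sym2.ind with
    | _ u v =>
      have huv : u ≠ v := (mem_edgeSet G).1 (mem_edgeFinset.1 he) |>.ne
      simp only [Sym2.lift_mk, gdeg_eq_degree, hd, Sym2.mem_iff, Sym2.eq_iff, eq_comm (a := a),
        eq_comm (a := b)]
      have hab := hadj.ne
      by_cases hua : u = a <;> by_cases hub : u = b <;> by_cases hva : v = a <;>
        by_cases hvb : v = b <;> simp_all <;> ring
  have hinc : ∀ x, ∑ e ∈ G.edgeFinset, (if x ∈ e then 1 else 0) = G.degree x := by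
    intro x
    rw [Finset.sum_boole, ← incidenceFinset_eq_filter, card_incidenceFinset_eq_degree,
      Nat.cast_id]
  rw [zagrebM2_eq_sum, Finset.sum_congr rfl hedge, Finset.sum_add_distrib, Finset.sum_add_distrib,
    ← Finset.mul_sum, Finset.sum_add_distrib, hinc, hinc, hd, hd,
    Finset.sum_ite_eq' _ _ (fun _ => 1), if_pos (G.mem_edgeFinset.2 hadj)]
  simp
  ring

lemma card_edgeFinset_mul_zagrebM1_lt (hadj : G.Adj a b)
    (hd : ∀ v, G.degree v = s + if v = a ∨ v = b then 1 else 0) (hV : 3 < Fintype.card V) :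
    #G.edgeFinset * zagrebM1 G < Fintype.card V * zagrebM2 G := by
  have hm := two_mul_card_edgeFinset_of_degree_eq hadj.ne hd
  rw [zagrebM1_of_degree_eq hadj.ne hd, zagrebM2_of_degree_eq hadj hd]
  nlinarith

end NearRegular

lemma degree_deleteEdges_singleton_add {V : Type*} [Fintype V] [DecidableEq V]
    {G : SimpleGraph V} [DecidableRel G.Adj] {e : Sym2 V} (he : e ∈ G.edgeSet) (w : V) :
    (G.deleteEdges {e}).degree w + (if w ∈ e then 1 else 0) = G.degree w := by
  have hinc : (G.deleteEdges {e}).incidenceFinset w = (G.incidenceFinset w).erase e := by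
    ext f
    simp only [mem_incidenceFinset, incidenceSet, edgeSet_deleteEdges, Set.mem_ofPred_eq,
      Set.mem_sdiff, Set.mem_singleton_iff, Finset.mem_erase]
    tauto
  rw [← card_incidenceFinset_eq_degree, ← card_incidenceFinset_eq_degree, hinc]
  split_ifs with hw
  · exact Finset.card_erase_add_one ((G.mem_incidenceFinset w e).2 ⟨he, hw⟩)
  · rw [Finset.erase_eq_of_notMem fun h => hw ((G.mem_incidenceFinset w e).1 h).2, add_zero]

lemma adj_symm_of_compl_iso_deleteEdges {V W : Type*} {G : SimpleGraph V} {H : SimpleGraph W}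
    {x y : W} (φ : Gᶜ ≃g H.deleteEdges {s(x, y)}) (hxy : H.Adj x y) :
    G.Adj (φ.symm x) (φ.symm y) := by
  by_contra h
  have hc : Gᶜ.Adj (φ.symm x) (φ.symm y) :=
    (compl_adj G _ _).2 ⟨φ.symm.injective.ne hxy.ne, h⟩
  simpa using φ.map_adj_iff.2 hc

lemma degree_eq_of_compl_iso_deleteEdges {V W : Type*} [Fintype V] [Fintype W] [DecidableEq V]
    [DecidableEq W] {G : SimpleGraph V} [DecidableRel G.Adj] {H : SimpleGraph W}
    [DecidableRel H.Adj] {x y : W} (φ : Gᶜ ≃g H.deleteEdges {s(x, y)}) {r : ℕ}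
    (hH : H.IsRegularOfDegree r) (hxy : H.Adj x y) (v : V) :
    G.degree v = (Fintype.card V - 1 - r) + if v = φ.symm x ∨ v = φ.symm y then 1 else 0 := by
  have hcompl : Gᶜ.degree v = Fintype.card V - 1 - G.degree v := degree_compl G v
  have hlt : G.degree v < Fintype.card V := G.degree_lt_card_verts v
  have hrlt : r < Fintype.card V := by
    rw [← hH.degree_eq x, Fintype.card_congr φ.toEquiv]
    exact H.degree_lt_card_verts x
  have hdel := degree_deleteEdges_singleton_add ((mem_edgeSet H).2 hxy) (φ v)
  simp only [φ.degree_eq, hH.degree_eq, Sym2.mem_iff, ← RelIso.eq_symm_apply φ] at hdel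
  split_ifs at hdel ⊢ <;> omega

/-- Let `G₁` be a regular graph of order `n > 3`, let `e₁` be an edge
of `G₁`, and let `G₂` be a graph of order `n` and size `m₂` whose complement is
isomorphic to `G₁ - e₁`. Then `m₂·M1(G₂) < n·M2(G₂)`. -/
theorem stmt_18 {V : Type*} [Fintype V] (G₁ G₂ : SimpleGraph V) (n m₂ : ℕ)
    (hn : n = Fintype.card V) (hn3 : 3 < n) (hreg : gregular G₁)
    (e₁ : Sym2 V) (he : e₁ ∈ G₁.edgeSet)
    (hm : m₂ = gsize G₂)
    (hiso : Nonempty (G₂ᶜ ≃g G₁.deleteEdges {e₁})) :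
    m₂ * zagrebM1 G₂ < n * zagrebM2 G₂ := by
  classical
  obtain ⟨r, hr⟩ := hreg
  obtain ⟨φ⟩ := hiso
  induction e₁ using Sym2.ind with
  | _ x y =>
    have hreg₁ : G₁.IsRegularOfDegree r := fun v => (gdeg_eq_degree G₁ v).symm.trans (hr v)
    subst hn hm
    rw [gsize_eq_card_edgeFinset]
    exact card_edgeFinset_mul_zagrebM1_lt (adj_symm_of_compl_iso_deleteEdges φ he)
      (degree_eq_of_compl_iso_deleteEdges φ hreg₁ he) hn3
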